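/- Let D be a probability distribution on a finite set V of size v ≥ 1. Then there exist functions A, B : {1,…,v} → V and weights q : {1,…,v} → [0,1] such that for every z ∈ V, D(z) = (1/v)·Σ_{i=1}^v (q(i)·[A(i)=z] + (1−q(i))·[B(i)=z]). That is, D is a uniform mixture of v two-point distributions. -/

import Mathlib

/-!
Scale the masses by `v`, so that they average to `1`. Some element `x` then has mass at most `1`
and some `y` has mass at least `1`. The first column is `x` with weight `w x` and `y` with weight
`1 - w x`: it exhausts the mass of `x`, and leaves `y` with mass `w y - (1 - w x) ≥ 0`. What remains
is `v - 1` elements carrying total mass `v - 1`, and induction finishes.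
-/

open Finset

section TwoPointMass

variable {V : Type*} [DecidableEq V]

def twoPointMass (a b : V) (q : ℝ) (z : V) : ℝ :=
  q * (if a = z then 1 else 0) + (1 - q) * (if b = z then 1 else 0)

lemma twoPointMass_of_ne {a b z : V} (q : ℝ) (ha : a ≠ z) (hb : b ≠ z) :
    twoPointMass a b q z = 0 := by
  simp [twoPointMass, ha, hb]

lemma sum_twoPointMass {s : Finset V} {a b : V} (ha : a ∈ s) (hb : b ∈ s) (q : ℝ) :
    ∑ z ∈ s, twoPointMass a b q z = 1 := by
  simp [twoPointMass, sum_add_distrib, ha, hb]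

variable {w : V → ℝ} {x y : V}

lemma sub_twoPointMass_self (hx : w x ≤ 1) (hy : 1 ≤ w y) :
    w x - twoPointMass x y (w x) x = 0 := by
  by_cases hxy : y = x
  · subst hxy
    simp [twoPointMass, le_antisymm hx hy]
  · simp [twoPointMass, hxy]

lemma sub_twoPointMass_nonneg (hw : ∀ z, 0 ≤ w z) (hx : w x ≤ 1) (hy : 1 ≤ w y) (z : V) :
    0 ≤ w z - twoPointMass x y (w x) z := by
  by_cases hxz : x = z
  · subst hxz
    exact (sub_twoPointMass_self hx hy).ge
  by_cases hyz : y = z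
  · subst hyz
    simp only [twoPointMass, if_neg hxz, if_true, mul_zero, zero_add, mul_one]
    linarith [hw x]
  · simpa [twoPointMass_of_ne _ hxz hyz] using hw z

theorem exists_sum_twoPointMass_eq (n : ℕ) (s : Finset V) (hn : #s = n) (hw : ∀ z, 0 ≤ w z)
    (hws : ∀ z ∉ s, w z = 0) (hsum : ∑ z ∈ s, w z = n) :
    ∃ (A B : Fin n → V) (q : Fin n → ℝ), (∀ i, q i ∈ Set.Icc (0 : ℝ) 1) ∧
      ∀ z, w z = ∑ i, twoPointMass (A i) (B i) (q i) z := by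
  induction n generalizing s w with
  | zero =>
    rw [card_eq_zero] at hn
    subst hn
    exact ⟨Fin.elim0, Fin.elim0, Fin.elim0, Fin.rec0, fun z => by simpa using hws z⟩
  | succ n ih =>
    have hs : s.Nonempty := card_pos.mp (by omega)
    obtain ⟨x, hxs, hx⟩ : ∃ x ∈ s, w x ≤ 1 := exists_le_of_sum_le hs (by simp [hsum, hn])
    obtain ⟨y, hys, hy⟩ : ∃ y ∈ s, 1 ≤ w y := exists_le_of_sum_le hs (by simp [hsum, hn])
    set g : V → ℝ := fun z => w z - twoPointMass x y (w x) z with hg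
    have hgx : g x = 0 := sub_twoPointMass_self hx hy
    have hgs : ∀ z ∉ s.erase x, g z = 0 := by
      intro z hz
      by_cases hzx : z = x
      · rwa [hzx]
      have hzs : z ∉ s := fun h => hz (mem_erase.mpr ⟨hzx, h⟩)
      simp only [hg, hws z hzs,
        twoPointMass_of_ne _ (ne_of_mem_of_not_mem hxs hzs) (ne_of_mem_of_not_mem hys hzs),
        sub_zero]
    have hgsum : ∑ z ∈ s.erase x, g z = n := by
      rw [sum_erase s hgx, sum_sub_distrib, hsum, sum_twoPointMass hxs hys]
      push_cast
      ring
    obtain ⟨A, B, q, hq, hrep⟩ := ih (s.erase x) (by rw [card_erase_of_mem hxs, hn]; rfl)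
      (sub_twoPointMass_nonneg hw hx hy) hgs hgsum
    refine ⟨Fin.cons x A, Fin.cons y B, Fin.cons (w x) q, Fin.cases ⟨hw x, hx⟩ hq, fun z => ?_⟩
    rw [Fin.sum_univ_succ]
    simp only [Fin.cons_zero, Fin.cons_succ, ← hrep]
    ring

end TwoPointMass

theorem alias_method_decomposition {V : Type*} [Fintype V] [DecidableEq V]
    (v : ℕ) (hv : 1 ≤ v) (hcard : Fintype.card V = v)
    (D : V → ℝ) (hD0 : ∀ z, 0 ≤ D z) (hD1 : ∑ z, D z = 1) :
    ∃ (A B : Fin v → V) (q : Fin v → ℝ),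
      (∀ i, q i ∈ Set.Icc (0 : ℝ) 1) ∧
      ∀ z : V, D z = (1 / (v : ℝ)) *
        ∑ i, (q i * (if A i = z then 1 else 0) + (1 - q i) * (if B i = z then 1 else 0)) := by
  have hv0 : (v : ℝ) ≠ 0 := Nat.cast_ne_zero.mpr (by omega)
  obtain ⟨A, B, q, hq, hrep⟩ := exists_sum_twoPointMass_eq (w := fun z => v * D z) v univ
    (by rw [card_univ, hcard]) (fun z => mul_nonneg v.cast_nonneg (hD0 z)) (by simp)
    (by rw [← mul_sum, hD1, mul_one])
  refine ⟨A, B, q, hq, fun z => ?_⟩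
  rw [show D z = 1 / v * (v * D z) by field_simp, hrep z]
  rfl
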